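/- Let m ≥ 1 and n_c ≥ 5 be integers. Every phase-cohesive configuration θ of the 1D honeycomb graph G(m, n_c) has winding vector lying in the set {k ∈ ℤ : |k| ≤ ⌈n_c/4⌉ − 1}^m, i.e., for every p ∈ {0, ..., m−1}, the winding number of θ along the p-th basis cycle σ_p is an integer of absolute value at most ⌈n_c/4⌉ − 1. -/

import Mathlib

/-- The counterclockwise difference: the unique element of `[-π, π)` congruent to `x`
modulo `2π`. -/
noncomputable def dcc (x : ℝ) : ℝ :=
  x - 2 * Real.pi * ((⌊(x + Real.pi) / (2 * Real.pi)⌋ : ℤ) : ℝ)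

/-- Edge relation of the 1D honeycomb graph `G(m, n_c)` on vertices `{1, ..., m(n_c-1)+1}`. -/
def honEdge (m nc i j : ℕ) : Prop :=
  (1 ≤ i ∧ i ≤ m * (nc - 1) ∧ j = i + 1) ∨
  (1 ≤ j ∧ j ≤ m * (nc - 1) ∧ i = j + 1) ∨
  (∃ p, p < m ∧ ((i = p * (nc - 1) + 1 ∧ j = (p + 1) * (nc - 1) + 1) ∨
                 (j = p * (nc - 1) + 1 ∧ i = (p + 1) * (nc - 1) + 1)))

/-- The winding number of `θ` along the `p`-th basis cycle of the 1D honeycomb graph. -/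
noncomputable def windingP (nc : ℕ) (θ : ℕ → ℝ) (p : ℕ) : ℝ :=
  (1 / (2 * Real.pi)) *
    ((∑ j ∈ Finset.range (nc - 1),
        dcc (θ (p * (nc - 1) + 1 + j + 1) - θ (p * (nc - 1) + 1 + j))) +
      dcc (θ (p * (nc - 1) + 1) - θ ((p + 1) * (nc - 1) + 1)))

open Finset Real

/-!
Each counterclockwise difference differs from the true difference by a multiple of `2π`, so
around a closed cycle the true differences telescope away and the sum of the `dcc` terms is
`2π q` for an integer `q`. Phase cohesion bounds each of the `n_c` terms of the `p`-th basis
cycle by `π / 2`, whence `2π |q| < n_c π / 2`, i.e. `|q| < n_c / 4`, which for an integer means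
`|q| ≤ ⌈n_c / 4⌉ - 1`.
-/

/-- `φ j` is the angle at the `j`-th vertex of a walk of length `ℓ`; the walk is closed when
`φ ℓ = φ 0`. -/
noncomputable def cycleWinding (ℓ : ℕ) (φ : ℕ → ℝ) : ℝ :=
  (1 / (2 * π)) * ∑ j ∈ range ℓ, dcc (φ (j + 1) - φ j)

theorem exists_sum_dcc_eq_sub_add (φ : ℕ → ℝ) (ℓ : ℕ) :
    ∃ q : ℤ, ∑ j ∈ range ℓ, dcc (φ (j + 1) - φ j) = φ ℓ - φ 0 + 2 * π * q := by
  refine ⟨-∑ j ∈ range ℓ, ⌊(φ (j + 1) - φ j + π) / (2 * π)⌋, ?_⟩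
  simp only [dcc, sum_sub_distrib, sum_range_sub φ, ← mul_sum]
  push_cast
  ring

theorem exists_int_cycleWinding_eq {φ : ℕ → ℝ} {ℓ : ℕ} (hclosed : φ ℓ = φ 0) :
    ∃ q : ℤ, cycleWinding ℓ φ = q := by
  obtain ⟨q, hq⟩ := exists_sum_dcc_eq_sub_add φ ℓ
  refine ⟨q, ?_⟩
  rw [cycleWinding, hq, hclosed]
  field_simp
  ring

theorem abs_cycleWinding_lt {φ : ℕ → ℝ} {ℓ : ℕ} (hℓ : 0 < ℓ)
    (hcoh : ∀ j < ℓ, |dcc (φ (j + 1) - φ j)| < π / 2) :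
    |cycleWinding ℓ φ| < ℓ / 4 := by
  have hsum : |∑ j ∈ range ℓ, dcc (φ (j + 1) - φ j)| < ℓ * (π / 2) :=
    calc |∑ j ∈ range ℓ, dcc (φ (j + 1) - φ j)|
        ≤ ∑ j ∈ range ℓ, |dcc (φ (j + 1) - φ j)| := abs_sum_le_sum_abs _ _
      _ < ∑ _j ∈ range ℓ, π / 2 :=
          sum_lt_sum_of_nonempty (nonempty_range_iff.2 hℓ.ne') fun j hj => hcoh j (mem_range.1 hj)
      _ = ℓ * (π / 2) := by rw [sum_const, card_range, nsmul_eq_mul]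
  rw [cycleWinding, abs_mul, abs_of_pos (by positivity : 0 < 1 / (2 * π))]
  calc 1 / (2 * π) * |∑ j ∈ range ℓ, dcc (φ (j + 1) - φ j)|
      < 1 / (2 * π) * (ℓ * (π / 2)) := mul_lt_mul_of_pos_left hsum (by positivity)
    _ = ℓ / 4 := by field_simp; ring

theorem Int.abs_le_ceil_sub_one_of_lt {α : Type*} [Ring α] [LinearOrder α] [FloorRing α]
    {q : ℤ} {r : α} (h : ((|q| : ℤ) : α) < r) : |q| ≤ ⌈r⌉ - 1 :=
  Int.le_sub_one_of_lt (Int.lt_ceil.2 h)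

/-- The `p`-th basis cycle of the honeycomb graph, as the closed walk
`a, a + 1, …, a + (n_c - 1), a` with `a = p (n_c - 1) + 1`. -/
def honCycle (nc p j : ℕ) : ℕ :=
  p * (nc - 1) + 1 + j % nc

theorem honEdge_honCycle {m nc p j : ℕ} (hp : p < m) (hj : j < nc) :
    honEdge m nc (honCycle nc p (j + 1)) (honCycle nc p j) := by
  have hpm : (p + 1) * (nc - 1) ≤ m * (nc - 1) := Nat.mul_le_mul_right _ hp
  rw [add_one_mul] at hpm
  unfold honCycle honEdge
  rcases Nat.lt_or_ge (j + 1) nc with hlt | hge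
  · rw [Nat.mod_eq_of_lt hlt, Nat.mod_eq_of_lt hj]
    exact Or.inr (Or.inl ⟨by omega, by omega, by omega⟩)
  · obtain rfl : nc = j + 1 := by omega
    rw [Nat.mod_self, Nat.mod_eq_of_lt hj]
    refine Or.inr (Or.inr ⟨p, hp, Or.inl ⟨rfl, ?_⟩⟩)
    simp only [Nat.add_sub_cancel]
    ring

theorem windingP_eq_cycleWinding {nc : ℕ} (hnc : 0 < nc) (θ : ℕ → ℝ) (p : ℕ) :
    windingP nc θ p = cycleWinding nc (θ ∘ honCycle nc p) := by
  obtain ⟨n, rfl⟩ : ∃ n, nc = n + 1 := ⟨nc - 1, by omega⟩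
  have hmod : ∀ j < n, (j + 1) % (n + 1) = j + 1 ∧ j % (n + 1) = j := fun j hj =>
    ⟨Nat.mod_eq_of_lt (by omega), Nat.mod_eq_of_lt (by omega)⟩
  rw [windingP, cycleWinding, sum_range_succ]
  congr 2
  · refine sum_congr rfl fun j hj => ?_
    obtain ⟨h1, h2⟩ := hmod j (mem_range.1 hj)
    simp only [Function.comp, honCycle, h1, h2, Nat.add_sub_cancel, add_assoc]
  · simp only [Function.comp, honCycle, Nat.mod_self, Nat.mod_eq_of_lt (Nat.lt_succ_self n),
      Nat.add_sub_cancel]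
    congr 3
    ring

theorem phase_cohesive_winding_vector_bound_general (m nc : ℕ) (hnc : 5 ≤ nc)
    (θ : ℕ → ℝ)
    (hcoh : ∀ i j, honEdge m nc i j → |dcc (θ i - θ j)| < Real.pi / 2) :
    ∀ p, p < m → ∃ q : ℤ, windingP nc θ p = (q : ℝ) ∧ |q| ≤ ⌈(nc : ℚ) / 4⌉ - 1 := by
  intro p hp
  have hnc₀ : 0 < nc := by omega
  have hclosed : (θ ∘ honCycle nc p) nc = (θ ∘ honCycle nc p) 0 := by
    simp [Function.comp, honCycle]
  obtain ⟨q, hq⟩ := exists_int_cycleWinding_eq hclosed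
  have hbound := abs_cycleWinding_lt (φ := θ ∘ honCycle nc p) hnc₀
    fun j hj => hcoh _ _ (honEdge_honCycle hp hj)
  rw [← windingP_eq_cycleWinding hnc₀] at hq hbound
  refine ⟨q, hq, Int.abs_le_ceil_sub_one_of_lt ?_⟩
  rw [hq] at hbound
  have hbound' : ((|q| : ℤ) : ℝ) < ((nc / 4 : ℚ) : ℝ) := by push_cast; exact hbound
  exact_mod_cast hbound'

/-- every phase-cohesive configuration `θ` of the 1D honeycomb graph has
winding vector in `{k ∈ ℤ : |k| ≤ ⌈n_c/4⌉ - 1}^m`: for every `p < m` the winding number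
of `θ` along the `p`-th basis cycle is an integer of absolute value at most `⌈n_c/4⌉ - 1`. -/
theorem phase_cohesive_winding_vector_bound (m nc : ℕ) (hm : 1 ≤ m) (hnc : 5 ≤ nc)
    (θ : ℕ → ℝ)
    (hcoh : ∀ i j, honEdge m nc i j → |dcc (θ i - θ j)| < Real.pi / 2) :
    ∀ p, p < m → ∃ q : ℤ, windingP nc θ p = (q : ℝ) ∧ |q| ≤ ⌈(nc : ℚ) / 4⌉ - 1 :=
  phase_cohesive_winding_vector_bound_general m nc hnc θ hcoh
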